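/- arXiv:2312.03947 — 2 statements merged into one kernel-verified Lean document; each statement's English description precedes it below -/
import Mathlib

section
/- Let n ≥ 2, let m₁,…,mₙ, a₁,…,aₙ, γ₁,…,γₙ, xₙ*, S*, D be positive reals, let D₁,…,Dₙ be reals, let q, p ∈ (0,1), and set fᵢ := mᵢS*/(S* + aᵢ) for i = 1,…,n, αₙ := mₙ/(S* + aₙ) − S*mₙ/(S* + aₙ)², and β := aₙmₙxₙ*/(γₙ(S* + aₙ)²). Consider the (n+1)×(n+1) real matrix M (indexed 0,…,n) with M(i,i) = fᵢ₊₁ − Dᵢ₊₁ for 0 ≤ i ≤ n−2 and all other entries of rows 0,…,n−2 equal to zero; row n−1 equal to (0,…,0, (fₙ − qDₙ)(1 − p), xₙ*·αₙ); and row n equal to (−f₁/γ₁, …, −fₙ/γₙ, −D + β). Assume fᵢ − Dᵢ < 0 for i = 1,…,n−1, assume (fₙ − qDₙ)(1 − p) − D + β < 0, and assume (fₙ − qDₙ)(1 − p)(−D + β) + (fₙ/γₙ)·xₙ*·αₙ > 0. Then every complex eigenvalue of M has negative real part. -/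
/-!
Rows `0, …, n-2` of `M` vanish off the diagonal, so `M` is block lower triangular. An
eigenvector either has a nonzero coordinate `i ≤ n-2`, and then the eigenvalue is
`M i i = fᵢ₊₁ - Dᵢ₊₁ < 0`, or it is supported on the last two coordinates, and then the
eigenvalue is one of the trailing `2 × 2` block, whose negative trace and positive determinant
place both its eigenvalues in the open left half-plane.
-/

open Complex

theorem Complex.re_neg_of_sq_sub_mul_add_eq_zero {t d : ℝ} {μ : ℂ} (ht : t < 0) (hd : 0 < d)
    (h : μ ^ 2 - t * μ + d = 0) : μ.re < 0 := by
  have hre : μ.re ^ 2 - μ.im ^ 2 - t * μ.re + d = 0 := by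
    simpa [sq] using congrArg Complex.re h
  have him : μ.im * (2 * μ.re - t) = 0 := by
    have h' := congrArg Complex.im h
    simp only [sq, add_im, sub_im, mul_im, ofReal_re, ofReal_im, zero_mul, add_zero, zero_im] at h'
    linear_combination h'
  rcases mul_eq_zero.mp him with him | him
  · rw [him] at hre
    nlinarith
  · linarith

namespace Matrix

variable {ι κ K : Type*} [Fintype ι] [Fintype κ] [Field K]

theorem eq_diag_of_mulVec_eq_smul {A : Matrix ι ι K} {μ : K} {v : ι → K} {i : ι}
    (hrow : ∀ j ≠ i, A i j = 0) (hv : A *ᵥ v = μ • v) (hvi : v i ≠ 0) : μ = A i i := by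
  have h := congrFun hv i
  rw [mulVec, dotProduct, Finset.sum_eq_single i (fun j _ hj => by rw [hrow j hj, zero_mul])
    (by simp)] at h
  exact mul_right_cancel₀ hvi (by simpa using h.symm)

variable [DecidableEq ι] [DecidableEq κ]

theorem exists_mulVec_eq_smul_of_isRoot_charpoly {A : Matrix ι ι K} {μ : K}
    (h : A.charpoly.IsRoot μ) : ∃ v ≠ 0, A *ᵥ v = μ • v := by
  obtain ⟨v, hv, hv0⟩ := ((Module.End.hasEigenvalue_iff_isRoot_charpoly A.toLin' μ).mpr
    (by rwa [charpoly_toLin'])).exists_hasEigenvector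
  exact ⟨v, hv0, by simpa using Module.End.mem_eigenspace_iff.mp hv⟩

theorem isRoot_charpoly_of_mulVec_eq_smul {A : Matrix ι ι K} {μ : K} {v : ι → K}
    (hv0 : v ≠ 0) (hv : A *ᵥ v = μ • v) : A.charpoly.IsRoot μ := by
  rw [← charpoly_toLin', ← Module.End.hasEigenvalue_iff_isRoot_charpoly]
  exact Module.End.hasEigenvalue_of_hasEigenvector
    ⟨Module.End.mem_eigenspace_iff.mpr (by simpa using hv), hv0⟩

theorem isRoot_charpoly_submatrix_of_mulVec_eq_smul {A : Matrix ι ι K} {μ : K} {v : ι → K}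
    {e : κ → ι} (he : Function.Injective e) (hsupp : ∀ i ∉ Set.range e, v i = 0)
    (hv0 : v ≠ 0) (hv : A *ᵥ v = μ • v) : (A.submatrix e e).charpoly.IsRoot μ := by
  refine isRoot_charpoly_of_mulVec_eq_smul (v := v ∘ e) ?_ ?_
  · intro h
    refine hv0 (funext fun i => ?_)
    by_cases hi : i ∈ Set.range e
    · obtain ⟨c, rfl⟩ := hi
      exact congrFun h c
    · exact hsupp i hi
  · ext c
    calc (A.submatrix e e *ᵥ (v ∘ e)) c = (A *ᵥ v) (e c) :=
          Fintype.sum_of_injective e he _ _ (fun i hi => by simp [hsupp i hi]) (fun _ => rfl)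
      _ = (μ • (v ∘ e)) c := by rw [hv]; rfl

theorem re_neg_of_isRoot_charpoly_of_trace_neg_of_det_pos {B : Matrix (Fin 2) (Fin 2) ℝ}
    (htr : B.trace < 0) (hdet : 0 < B.det) {μ : ℂ} (h : (B.map ofReal).charpoly.IsRoot μ) :
    μ.re < 0 := by
  have hμ : μ ^ 2 - (B.trace : ℂ) * μ + B.det = 0 := by
    simpa [charpoly_fin_two, trace_fin_two, det_fin_two] using h
  exact Complex.re_neg_of_sq_sub_mul_add_eq_zero htr hdet hμ

theorem re_neg_of_isRoot_charpoly_of_rows_diagonal_off_range {A : Matrix ι ι ℝ} {e : κ → ι}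
    (he : Function.Injective e) (hrow : ∀ i ∉ Set.range e, ∀ j ≠ i, A i j = 0)
    (hdiag : ∀ i ∉ Set.range e, A i i < 0)
    (hblock : ∀ μ : ℂ, ((A.submatrix e e).map ofReal).charpoly.IsRoot μ → μ.re < 0)
    (μ : ℂ) (h : (A.map ofReal).charpoly.IsRoot μ) : μ.re < 0 := by
  obtain ⟨v, hv0, hv⟩ := exists_mulVec_eq_smul_of_isRoot_charpoly h
  by_cases hsupp : ∀ i ∉ Set.range e, v i = 0
  · refine hblock μ ?_
    rw [← submatrix_map]
    exact isRoot_charpoly_submatrix_of_mulVec_eq_smul he hsupp hv0 hv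
  · push Not at hsupp
    obtain ⟨i, hi, hvi⟩ := hsupp
    rw [eq_diag_of_mulVec_eq_smul (fun j hj => by simp [hrow i hi j hj]) hv hvi]
    simpa using hdiag i hi

end Matrix

theorem n_species_boundary_equilibrium_sink
    (n : ℕ) (hn : 2 ≤ n)
    (γ : Fin n → ℝ) (Drem : Fin n → ℝ) (xn D q p : ℝ)
    (f : Fin n → ℝ)
    (αn β : ℝ)
    (M : Matrix (Fin (n + 1)) (Fin (n + 1)) ℝ)
    -- rows 0, …, n-2 : only the diagonal entry `fᵢ₊₁ - Dᵢ₊₁` is nonzero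
    (hMdiag : ∀ i : Fin (n + 1), ∀ hi : (i : ℕ) ≤ n - 2,
      M i i = f ⟨(i : ℕ), by omega⟩ - Drem ⟨(i : ℕ), by omega⟩)
    (hMoff : ∀ i j : Fin (n + 1), (i : ℕ) ≤ n - 2 → i ≠ j → M i j = 0)
    -- row n-1 : `(0, …, 0, (fₙ - qDₙ)(1 - p), xₙ*·αₙ)`
    (hMrowd : M ⟨n - 1, by omega⟩ ⟨n - 1, by omega⟩
      = (f ⟨n - 1, by omega⟩ - q * Drem ⟨n - 1, by omega⟩) * (1 - p))
    (hMrowl : M ⟨n - 1, by omega⟩ ⟨n, by omega⟩ = xn * αn)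
    -- row n : `(-f₁/γ₁, …, -fₙ/γₙ, -D + β)`
    (hMlast : ∀ j : Fin n, M ⟨n, by omega⟩ ⟨(j : ℕ), by omega⟩ = -f j / γ j)
    (hMll : M ⟨n, by omega⟩ ⟨n, by omega⟩ = -D + β)
    -- stability hypotheses
    (hneg : ∀ i : Fin n, (i : ℕ) < n - 1 → f i - Drem i < 0)
    (htrace : (f ⟨n - 1, by omega⟩ - q * Drem ⟨n - 1, by omega⟩) * (1 - p) - D + β < 0)
    (hdet : (f ⟨n - 1, by omega⟩ - q * Drem ⟨n - 1, by omega⟩) * (1 - p) * (-D + β)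
      + (f ⟨n - 1, by omega⟩ / γ ⟨n - 1, by omega⟩) * xn * αn > 0) :
    ∀ μ : ℂ, ((M.map (Complex.ofReal)).charpoly).IsRoot μ → μ.re < 0 := by
  set j : Fin (n + 1) := ⟨n - 1, by omega⟩
  set k : Fin (n + 1) := ⟨n, by omega⟩
  have hjk : j ≠ k := Fin.ne_of_val_ne (show n - 1 ≠ n by omega)
  have hsmall : ∀ i ∉ Set.range ![j, k], (i : ℕ) ≤ n - 2 := by
    intro i hi
    by_contra h
    rcases (by omega : (i : ℕ) = n - 1 ∨ (i : ℕ) = n) with h | h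
    exacts [hi ⟨0, Fin.ext h.symm⟩, hi ⟨1, Fin.ext h.symm⟩]
  refine Matrix.re_neg_of_isRoot_charpoly_of_rows_diagonal_off_range (e := ![j, k])
    ?_ (fun i hi l hl => hMoff i l (hsmall i hi) hl.symm) (fun i hi => ?_) (fun μ => ?_)
  · simp [Function.Injective, Fin.forall_fin_two, hjk, hjk.symm]
  · rw [hMdiag i (hsmall i hi)]
    exact hneg _ (show (i : ℕ) < n - 1 by have := hsmall i hi; omega)
  · have hkj : M k j = -f ⟨n - 1, by omega⟩ / γ ⟨n - 1, by omega⟩ := hMlast ⟨n - 1, by omega⟩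
    apply Matrix.re_neg_of_isRoot_charpoly_of_trace_neg_of_det_pos
    · rw [Matrix.trace_fin_two]
      show M j j + M k k < 0
      rw [hMrowd, hMll]
      linarith
    · rw [Matrix.det_fin_two]
      show 0 < M j j * M k k - M j k * M k j
      rw [hMrowd, hMll, hMrowl, hkj]
      linear_combination hdet
end

section
/- Let C₁, C₂ > 0 and 1 < l < 2, and let u₀ > (C₂/C₁)^{1/(l−1)}. Then there is no differentiable function u : [0, ∞) → ℝ with u(0) = u₀, u(t) > 0 for all t ≥ 0, and u'(t) ≥ C₁·u(t)^l − C₂·u(t) for all t ≥ 0. Equivalently, any positive solution of this differential inequality with sufficiently large initial data blows up in finite time. -/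
/-!
The substitution `w = u ^ (1 - l)` linearises the inequality: `w' ≤ (l - 1) C₂ (w - C₁ / C₂)`.
The condition on `u₀` says exactly `w 0 < C₁ / C₂`, so by Grönwall
`w t - C₁ / C₂ ≤ (w 0 - C₁ / C₂) exp ((l - 1) C₂ t) → -∞`, which contradicts `w > 0`.
-/

open Real Set Filter

lemma le_mul_exp_of_hasDerivWithinAt_le_mul {f f' : ℝ → ℝ} {k : ℝ}
    (hf : ∀ t, 0 ≤ t → HasDerivWithinAt f (f' t) (Ici 0) t)
    (hbound : ∀ t, 0 ≤ t → f' t ≤ k * f t) {t : ℝ} (ht : 0 ≤ t) :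
    f t ≤ f 0 * exp (k * t) := by
  have hf_Ici : ∀ s ∈ Ico 0 t, HasDerivWithinAt f (f' s) (Ici s) s := fun s hs =>
    (hf s hs.1).mono (Ici_subset_Ici.2 hs.1)
  have hcont : ContinuousOn f (Icc 0 t) := fun s hs =>
    (hf s hs.1).continuousWithinAt.mono Icc_subset_Ici_self
  have := le_gronwallBound_of_liminf_deriv_right_le (ε := 0) hcont
    (fun s hs _ hr => (hf_Ici s hs).liminf_right_slope_le hr) le_rfl
    (fun s hs => by simpa using hbound s hs.1) t ⟨ht, le_rfl⟩
  simpa [gronwallBound_ε0] using this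

lemma tendsto_atBot_of_hasDerivWithinAt_le_mul {f f' : ℝ → ℝ} {k : ℝ}
    (hf : ∀ t, 0 ≤ t → HasDerivWithinAt f (f' t) (Ici 0) t)
    (hbound : ∀ t, 0 ≤ t → f' t ≤ k * f t) (hk : 0 < k) (h0 : f 0 < 0) :
    Tendsto f atTop atBot := by
  have hexp : Tendsto (fun t => f 0 * exp (k * t)) atTop atBot :=
    (tendsto_exp_atTop.comp (tendsto_id.const_mul_atTop hk)).const_mul_atTop_of_neg h0
  refine tendsto_atBot_mono' atTop ?_ hexp
  filter_upwards [eventually_ge_atTop 0] with t ht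
  exact le_mul_exp_of_hasDerivWithinAt_le_mul hf hbound ht

lemma rpow_neg_lt_inv_of_rpow_one_div_lt {a p u : ℝ} (ha : 0 < a) (hp : 0 < p)
    (h : a ^ (1 / p) < u) : u ^ (-p) < a⁻¹ := by
  calc u ^ (-p) < (a ^ (1 / p)) ^ (-p) := rpow_lt_rpow_of_neg (by positivity) h (by linarith)
    _ = a⁻¹ := by rw [← rpow_mul ha.le, one_div_mul_eq_div, neg_div_self hp.ne', rpow_neg_one]

lemma mul_one_sub_mul_rpow_sub_one_le {C₁ C₂ l x x' : ℝ} (hC₂ : C₂ ≠ 0) (hl : 1 < l)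
    (hx : 0 < x) (h : C₁ * x ^ l - C₂ * x ≤ x') :
    x' * (1 - l) * x ^ (1 - l - 1) ≤ (l - 1) * C₂ * (x ^ (1 - l) - C₁ / C₂) := by
  have hxl : 0 < x ^ l := rpow_pos_of_pos hx l
  have hx_pow : x ^ (1 - l - 1) = (x ^ l)⁻¹ := by rw [← rpow_neg hx.le]; ring_nf
  have hx_one_sub : x ^ (1 - l) = x * (x ^ l)⁻¹ := by
    rw [rpow_sub hx, rpow_one, div_eq_mul_inv]
  have hfactor : (1 - l) * (x ^ l)⁻¹ ≤ 0 :=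
    mul_nonpos_of_nonpos_of_nonneg (by linarith) (by positivity)
  rw [hx_pow, hx_one_sub]
  calc x' * (1 - l) * (x ^ l)⁻¹ = x' * ((1 - l) * (x ^ l)⁻¹) := by ring
    _ ≤ (C₁ * x ^ l - C₂ * x) * ((1 - l) * (x ^ l)⁻¹) := mul_le_mul_of_nonpos_right h hfactor
    _ = (l - 1) * C₂ * (x * (x ^ l)⁻¹ - C₁ / C₂) := by field_simp; ring

theorem superlinear_inequality_blowup_general
    (C₁ C₂ l u₀ : ℝ) (hC₁ : 0 < C₁) (hC₂ : 0 < C₂) (hl₁ : 1 < l)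
    (hu₀ : (C₂ / C₁) ^ (1 / (l - 1)) < u₀) :
    ¬ ∃ (u u' : ℝ → ℝ),
        u 0 = u₀ ∧
        (∀ t : ℝ, 0 ≤ t → 0 < u t) ∧
        (∀ t : ℝ, 0 ≤ t → HasDerivWithinAt u (u' t) (Set.Ici 0) t) ∧
        (∀ t : ℝ, 0 ≤ t → C₁ * u t ^ l - C₂ * u t ≤ u' t) := by
  rintro ⟨u, u', rfl, hpos, hderiv, hineq⟩
  have hw0 : u 0 ^ (1 - l) < C₁ / C₂ := by
    simpa only [neg_sub, inv_div] using
      rpow_neg_lt_inv_of_rpow_one_div_lt (div_pos hC₂ hC₁) (sub_pos.2 hl₁) hu₀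
  have hw_atBot : Tendsto (fun t => u t ^ (1 - l) - C₁ / C₂) atTop atBot :=
    tendsto_atBot_of_hasDerivWithinAt_le_mul
      (fun t ht => ((hderiv t ht).rpow_const (.inl (hpos t ht).ne')).sub_const _)
      (fun t ht => mul_one_sub_mul_rpow_sub_one_le hC₂.ne' hl₁ (hpos t ht) (hineq t ht))
      (mul_pos (sub_pos.2 hl₁) hC₂) (sub_neg.2 hw0)
  obtain ⟨t, ht, ht0⟩ :=
    ((hw_atBot.eventually_lt_atBot (-(C₁ / C₂))).and (eventually_ge_atTop 0)).exists
  linarith [rpow_pos_of_pos (hpos t ht0) (1 - l)]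

/-- Finite-time blow-up by comparison with `ẋ = C₁x^l - C₂x`, `1 < l < 2`: there is no
globally defined differentiable positive function `u` on `[0, ∞)` with
`u(0) = u₀ > (C₂/C₁)^(1/(l-1))` satisfying `u' ≥ C₁ u^l - C₂ u`. -/
theorem superlinear_inequality_blowup
    (C₁ C₂ l u₀ : ℝ) (hC₁ : 0 < C₁) (hC₂ : 0 < C₂) (hl₁ : 1 < l) (hl₂ : l < 2)
    (hu₀ : (C₂ / C₁) ^ (1 / (l - 1)) < u₀) :
    ¬ ∃ (u u' : ℝ → ℝ),
        u 0 = u₀ ∧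
        (∀ t : ℝ, 0 ≤ t → 0 < u t) ∧
        (∀ t : ℝ, 0 ≤ t → HasDerivWithinAt u (u' t) (Set.Ici 0) t) ∧
        (∀ t : ℝ, 0 ≤ t → C₁ * u t ^ l - C₂ * u t ≤ u' t) :=
  superlinear_inequality_blowup_general C₁ C₂ l u₀ hC₁ hC₂ hl₁ hu₀
end
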